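/- arXiv:1805.09777 — 2 statements merged into one kernel-verified Lean document; each statement's English description precedes it below -/
import Mathlib

section
/- Any subset of Σ containing at least 4 distinct elements spans a linear subspace of ℝ^6 of dimension at least 3. -/
/-
Every weight `x ∈ Σ` has `⟪x, x⟫ = 4/3`, reflections being isometries, and `x - μ` lies in the root
lattice, because `⟪x, α⟫ ∈ ℤ` for every root `α`. The root lattice is even, so for `x ≠ y` in `Σ`
the number `‖x - y‖² = 8/3 - 2⟪x, y⟫` is a positive even integer, and `‖x + y‖² ≥ 0` bounds it by
`16/3`; hence `⟪x, y⟫ ∈ {1/3, -2/3}`. For three such vectors the Gram determinant vanishes only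
when all three inner products are `-2/3`, and then `x + y + z = 0`. If four points of `Σ` spanned
at most a plane, `a + b + c = 0 = a + b + d` would force `c = d`.
-/


noncomputable section

/-- `ℝ^6` with the standard inner product. -/
abbrev E6V : Type := EuclideanSpace ℝ (Fin 6)

/-- Turn a plain function `Fin 6 → ℝ` into a vector of `E6V`. -/
def toE (f : Fin 6 → ℝ) : E6V := (WithLp.equiv 2 (Fin 6 → ℝ)).symm f

/-- The standard basis vector `e i`. -/
def stdE (i : Fin 6) : E6V := EuclideanSpace.single i 1

/-- The set `Φ⁺` of positive roots of `E₆`: the 20 vectors `e i ± e j` for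
`2 ≤ i < j ≤ 6` (zero-based: `1 ≤ i < j ≤ 5`), together with the 16 vectors
`(√3/2, ±1/2, ±1/2, ±1/2, ±1/2, ±1/2)` with an even number of minus signs. -/
def PhiPlus : Set E6V :=
  {v | ∃ i j : Fin 6, 0 < (i : ℕ) ∧ i < j ∧ (v = stdE i + stdE j ∨ v = stdE i - stdE j)} ∪
  {v | ∃ s : Fin 5 → ℝ, (∀ k, s k = 1 ∨ s k = -1) ∧
      Even (Finset.univ.filter (fun k => s k = -1)).card ∧
      v = toE (Fin.cons (Real.sqrt 3 / 2) (fun k => s k / 2))}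

/-- The set `Φ = Φ⁺ ∪ (−Φ⁺)` of all roots of `E₆`. -/
def Phi : Set E6V := PhiPlus ∪ (-PhiPlus)

/-- Orthogonal reflection in the vector `v`. -/
def reflectIn (v : E6V) (x : E6V) : E6V :=
  x - (2 * (inner ℝ x v : ℝ) / (inner ℝ v v : ℝ)) • v

/-- The minuscule weight `μ = ((2√3)/3, 0, 0, 0, 0, 0)`. -/
def muE6 : E6V := toE ![2 * Real.sqrt 3 / 3, 0, 0, 0, 0, 0]

/-- The 27 weights of the minuscule representation of `E₆`: everything obtained
from `μ` by applying at most two root reflections. -/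
def SigmaE6 : Set E6V :=
  {muE6} ∪ {x | ∃ v ∈ Phi, x = reflectIn v muE6} ∪
    {x | ∃ v ∈ Phi, ∃ w ∈ Phi, x = reflectIn v (reflectIn w muE6)}

open scoped InnerProductSpace

section InnerProductSpace

variable {E : Type*} [NormedAddCommGroup E] [InnerProductSpace ℝ E] {R : Set E} {x y z : E}

lemma exists_int_inner_of_mem_closure (hx : ∀ v ∈ R, ∃ n : ℤ, ⟪x, v⟫_ℝ = n)
    (hy : y ∈ AddSubgroup.closure R) : ∃ n : ℤ, ⟪x, y⟫_ℝ = n := by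
  induction hy using AddSubgroup.closure_induction with
  | mem v hv => exact hx v hv
  | zero => exact ⟨0, by simp⟩
  | add y z _ _ hy hz =>
    obtain ⟨m, hm⟩ := hy
    obtain ⟨n, hn⟩ := hz
    exact ⟨m + n, by rw [inner_add_right, hm, hn, Int.cast_add]⟩
  | neg y _ hy =>
    obtain ⟨m, hm⟩ := hy
    exact ⟨-m, by rw [inner_neg_right, hm, Int.cast_neg]⟩

lemma exists_int_inner_of_mem_closure_of_mem_closure
    (hR : ∀ v ∈ R, ∀ w ∈ R, ∃ n : ℤ, ⟪v, w⟫_ℝ = n)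
    (hx : x ∈ AddSubgroup.closure R) (hy : y ∈ AddSubgroup.closure R) :
    ∃ n : ℤ, ⟪x, y⟫_ℝ = n := by
  refine exists_int_inner_of_mem_closure (fun v hv => ?_) hy
  obtain ⟨n, hn⟩ := exists_int_inner_of_mem_closure (hR v hv) hx
  exact ⟨n, by rw [real_inner_comm, hn]⟩

lemma exists_inner_self_eq_two_mul_of_mem_closure (hR₂ : ∀ v ∈ R, ⟪v, v⟫_ℝ = 2)
    (hR : ∀ v ∈ R, ∀ w ∈ R, ∃ n : ℤ, ⟪v, w⟫_ℝ = n) (hx : x ∈ AddSubgroup.closure R) :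
    ∃ m : ℤ, ⟪x, x⟫_ℝ = 2 * m := by
  induction hx using AddSubgroup.closure_induction with
  | mem v hv => exact ⟨1, by rw [hR₂ v hv, Int.cast_one, mul_one]⟩
  | zero => exact ⟨0, by simp⟩
  | add y z hy hz hyy hzz =>
    obtain ⟨a, ha⟩ := hyy
    obtain ⟨b, hb⟩ := hzz
    obtain ⟨n, hn⟩ := exists_int_inner_of_mem_closure_of_mem_closure hR hy hz
    exact ⟨a + b + n, by rw [real_inner_add_add_self, ha, hb, hn]; push_cast; ring⟩
  | neg y _ hyy => simpa only [inner_neg_neg] using hyy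

lemma inner_eq_of_inner_self_eq_four_thirds (hx : ⟪x, x⟫_ℝ = 4 / 3) (hy : ⟪y, y⟫_ℝ = 4 / 3)
    (hxy : x ≠ y) {m : ℤ} (hm : ⟪x - y, x - y⟫_ℝ = 2 * m) :
    ⟪x, y⟫_ℝ = 1 / 3 ∨ ⟪x, y⟫_ℝ = -2 / 3 := by
  have hsub : ⟪x - y, x - y⟫_ℝ = 8 / 3 - 2 * ⟪x, y⟫_ℝ := by
    rw [real_inner_sub_sub_self, hx, hy]; ring
  have hadd : ⟪x + y, x + y⟫_ℝ = 8 / 3 + 2 * ⟪x, y⟫_ℝ := by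
    rw [real_inner_add_add_self, hx, hy]; ring
  have hm_pos : 0 < m := by
    have := real_inner_self_pos.2 (sub_ne_zero.2 hxy)
    exact_mod_cast (show (0 : ℝ) < m by linarith)
  have hm_lt : m < 3 := by
    have := real_inner_self_nonneg (x := x + y)
    exact_mod_cast (show (m : ℝ) < 3 by linarith)
  obtain rfl | rfl : m = 1 ∨ m = 2 := by omega
  · left; push_cast at hm; linarith
  · right; push_cast at hm; linarith

lemma add_add_eq_zero_of_not_linearIndependent (hx : ⟪x, x⟫_ℝ = 4 / 3)
    (hy : ⟪y, y⟫_ℝ = 4 / 3) (hz : ⟪z, z⟫_ℝ = 4 / 3)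
    (hxy : ⟪x, y⟫_ℝ = 1 / 3 ∨ ⟪x, y⟫_ℝ = -2 / 3) (hxz : ⟪x, z⟫_ℝ = 1 / 3 ∨ ⟪x, z⟫_ℝ = -2 / 3)
    (hyz : ⟪y, z⟫_ℝ = 1 / 3 ∨ ⟪y, z⟫_ℝ = -2 / 3) (hdep : ¬ LinearIndependent ℝ ![x, y, z]) :
    x + y + z = 0 := by
  -- the Gram determinant `64/27 + 2pqr - 4/3 (p² + q² + r²)` vanishes only at `p = q = r = -2/3`
  have hdet : (Matrix.gram ℝ ![x, y, z]).det = 0 :=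
    not_not.1 (mt Matrix.linearIndependent_of_det_gram_ne_zero hdep)
  simp only [Matrix.det_fin_three, Matrix.gram_apply, Matrix.cons_val_zero, Matrix.cons_val_one,
    Matrix.cons_val_two, Matrix.tail_cons, Matrix.head_cons] at hdet
  rw [real_inner_comm x y, real_inner_comm x z, real_inner_comm y z, hx, hy, hz] at hdet
  have hneg : ⟪x, y⟫_ℝ = -2 / 3 ∧ ⟪x, z⟫_ℝ = -2 / 3 ∧ ⟪y, z⟫_ℝ = -2 / 3 := by
    rcases hxy with h₁ | h₁ <;> rcases hxz with h₂ | h₂ <;> rcases hyz with h₃ | h₃ <;>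
      first | exact ⟨h₁, h₂, h₃⟩ | norm_num [h₁, h₂, h₃] at hdet
  obtain ⟨h₁, h₂, h₃⟩ := hneg
  rw [← inner_self_eq_zero (𝕜 := ℝ)]
  simp only [inner_add_left, inner_add_right, real_inner_comm x y, real_inner_comm x z,
    real_inner_comm y z, hx, hy, hz, h₁, h₂, h₃]
  norm_num

lemma three_le_finrank_span_of_inner {s : Set E} (hs : ∀ x ∈ s, ⟪x, x⟫_ℝ = 4 / 3)
    (hs' : ∀ x ∈ s, ∀ y ∈ s, x ≠ y → ⟪x, y⟫_ℝ = 1 / 3 ∨ ⟪x, y⟫_ℝ = -2 / 3)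
    (hcard : 4 ≤ s.ncard) : 3 ≤ Module.finrank ℝ (Submodule.span ℝ s) := by
  have hfin : s.Finite := Set.finite_of_ncard_ne_zero (by omega)
  have := FiniteDimensional.span_of_finite ℝ hfin
  by_contra! hlt
  have hsum : ∀ x ∈ s, ∀ y ∈ s, ∀ z ∈ s, x ≠ y → x ≠ z → y ≠ z → x + y + z = 0 := by
    intro x hx y hy z hz hxy hxz hyz
    refine add_add_eq_zero_of_not_linearIndependent (hs x hx) (hs y hy) (hs z hz)
      (hs' x hx y hy hxy) (hs' x hx z hz hxz) (hs' y hy z hz hyz) fun hli => hlt.not_ge ?_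
    have hrange : Set.range ![x, y, z] ⊆ s := by
      rintro _ ⟨i, rfl⟩
      fin_cases i <;> assumption
    calc 3 = Module.finrank ℝ (Submodule.span ℝ (Set.range ![x, y, z])) := by
          rw [finrank_span_eq_card hli, Fintype.card_fin]
      _ ≤ _ := Submodule.finrank_mono (Submodule.span_mono hrange)
  obtain ⟨a, ha, b, hb, c, hc, d, hd, hab, hac, had, hbc, hbd, hcd⟩ :=
    (Set.three_lt_ncard hfin).1 hcard
  have habc := hsum a ha b hb c hc hab hac hbc
  have habd := hsum a ha b hb d hd hab had hbd
  exact hcd (add_left_cancel (habc.trans habd.symm))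

end InnerProductSpace

lemma reflectIn_neg (v x : E6V) : reflectIn (-v) x = reflectIn v x := by
  simp only [reflectIn, inner_neg_left, inner_neg_right, neg_neg, mul_neg, neg_div, neg_smul,
    smul_neg]

lemma reflectIn_of_inner_self_eq_two {v : E6V} (hv : ⟪v, v⟫_ℝ = 2) (x : E6V) :
    reflectIn v x = x - ⟪x, v⟫_ℝ • v := by
  rw [reflectIn, hv, mul_div_cancel_left₀ _ two_ne_zero]

lemma inner_reflectIn_self (v x : E6V) :
    ⟪reflectIn v x, reflectIn v x⟫_ℝ = ⟪x, x⟫_ℝ := by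
  rcases eq_or_ne v 0 with rfl | hv
  · simp [reflectIn]
  have hvv : ⟪v, v⟫_ℝ ≠ 0 := inner_self_ne_zero.2 hv
  simp only [reflectIn, real_inner_sub_sub_self, real_inner_smul_left, real_inner_smul_right]
  field_simp
  ring

def zdot (x y : Fin 6 → ℤ) : ℤ :=
  3 * x 0 * y 0 + x 1 * y 1 + x 2 * y 2 + x 3 * y 3 + x 4 * y 4 + x 5 * y 5

/-- Coordinates in which every root and `μ` is integral. -/
def emb (z : Fin 6 → ℤ) : E6V := toE (Fin.cons (√3 * z 0 / 6) fun k => z k.succ / 6)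

lemma inner_emb (x y : Fin 6 → ℤ) : ⟪emb x, emb y⟫_ℝ = zdot x y / 36 := by
  have h3 : √3 * √3 = 3 := Real.mul_self_sqrt (by norm_num)
  simp only [emb, toE, zdot, PiLp.inner_apply, RCLike.inner_apply, conj_trivial,
    WithLp.equiv_symm_apply, Fin.sum_univ_succ, Fin.sum_univ_zero,
    Fin.cons_zero, Fin.cons_succ]
  push_cast
  linear_combination (x 0 * y 0 / 36 : ℝ) * h3

lemma emb_add (x y : Fin 6 → ℤ) : emb (x + y) = emb x + emb y := by
  ext k
  refine Fin.cases ?_ (fun k => ?_) k <;>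
    simp only [emb, toE, Pi.add_apply, Int.cast_add, WithLp.equiv_symm_apply, Fin.cons_zero,
      Fin.cons_succ, PiLp.add_apply] <;>
    ring

lemma emb_sub (x y : Fin 6 → ℤ) : emb (x - y) = emb x - emb y :=
  eq_sub_of_add_eq (by rw [← emb_add, sub_add_cancel])

lemma stdE_eq_emb {i : Fin 6} (hi : i ≠ 0) : stdE i = emb (Pi.single i 6) := by
  ext k
  refine Fin.cases ?_ (fun k => ?_) k
  · simp [stdE, emb, toE, Ne.symm hi]
  · by_cases hk : k.succ = i
    · subst hk; simp [stdE, emb, toE]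
    · simp [stdE, emb, toE, hk, Pi.single_apply]

lemma muE6_eq_emb : muE6 = emb ![4, 0, 0, 0, 0, 0] := by
  ext k
  refine Fin.cases ?_ (fun k => ?_) k
  · simp only [muE6, emb, toE, WithLp.equiv_symm_apply, Matrix.cons_val_zero, Int.cast_ofNat,
      Fin.cons_zero]
    ring
  · simp only [muE6, emb, toE, WithLp.equiv_symm_apply, PiLp.toLp_apply, Fin.cons_succ,
      Matrix.cons_val_succ]
    fin_cases k <;> simp

/-- The positive roots, in the coordinates of `emb`. -/
def rootsZ : List (Fin 6 → ℤ) := [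
  ![0, 6, 6, 0, 0, 0],
  ![0, 6, -6, 0, 0, 0],
  ![0, 6, 0, 6, 0, 0],
  ![0, 6, 0, -6, 0, 0],
  ![0, 6, 0, 0, 6, 0],
  ![0, 6, 0, 0, -6, 0],
  ![0, 6, 0, 0, 0, 6],
  ![0, 6, 0, 0, 0, -6],
  ![0, 0, 6, 6, 0, 0],
  ![0, 0, 6, -6, 0, 0],
  ![0, 0, 6, 0, 6, 0],
  ![0, 0, 6, 0, -6, 0],
  ![0, 0, 6, 0, 0, 6],
  ![0, 0, 6, 0, 0, -6],
  ![0, 0, 0, 6, 6, 0],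
  ![0, 0, 0, 6, -6, 0],
  ![0, 0, 0, 6, 0, 6],
  ![0, 0, 0, 6, 0, -6],
  ![0, 0, 0, 0, 6, 6],
  ![0, 0, 0, 0, 6, -6],
  ![3, 3, 3, 3, 3, 3],
  ![3, 3, 3, 3, -3, -3],
  ![3, 3, 3, -3, 3, -3],
  ![3, 3, 3, -3, -3, 3],
  ![3, 3, -3, 3, 3, -3],
  ![3, 3, -3, 3, -3, 3],
  ![3, 3, -3, -3, 3, 3],
  ![3, 3, -3, -3, -3, -3],
  ![3, -3, 3, 3, 3, -3],
  ![3, -3, 3, 3, -3, 3],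
  ![3, -3, 3, -3, 3, 3],
  ![3, -3, 3, -3, -3, -3],
  ![3, -3, -3, 3, 3, 3],
  ![3, -3, -3, 3, -3, -3],
  ![3, -3, -3, -3, 3, -3],
  ![3, -3, -3, -3, -3, 3]]

lemma zdot_self_of_mem_rootsZ : ∀ r ∈ rootsZ, zdot r r = 72 := by decide

lemma dvd_zdot_of_mem_rootsZ : ∀ r ∈ rootsZ, ∀ r' ∈ rootsZ, 36 ∣ zdot r r' := by decide

lemma dvd_zdot_muE6_of_mem_rootsZ : ∀ r ∈ rootsZ, 36 ∣ zdot ![4, 0, 0, 0, 0, 0] r := by decide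

lemma single_add_and_sub_single_mem_rootsZ : ∀ i j : Fin 6, 0 < i → i < j →
    Pi.single i 6 + Pi.single j 6 ∈ rootsZ ∧ Pi.single i 6 - Pi.single j 6 ∈ rootsZ := by
  decide

lemma cons_mem_rootsZ : ∀ A : Finset (Fin 5), Even A.card →
    (Fin.cons 3 fun k => if k ∈ A then -3 else 3) ∈ rootsZ := by
  decide

lemma exists_mem_rootsZ_of_mem_PhiPlus {v : E6V} (hv : v ∈ PhiPlus) :
    ∃ r ∈ rootsZ, v = emb r := by
  rcases hv with ⟨i, j, hi, hij, hv⟩ | ⟨s, hs, heven, rfl⟩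
  · have hi' : i ≠ 0 := Fin.pos_iff_ne_zero.1 hi
    have hj' : j ≠ 0 := Fin.pos_iff_ne_zero.1 (hi.trans hij)
    obtain ⟨hadd, hsub⟩ := single_add_and_sub_single_mem_rootsZ i j hi hij
    rw [stdE_eq_emb hi', stdE_eq_emb hj', ← emb_add, ← emb_sub] at hv
    rcases hv with rfl | rfl
    exacts [⟨_, hadd, rfl⟩, ⟨_, hsub, rfl⟩]
  · set A := Finset.univ.filter fun k => s k = -1
    refine ⟨_, cons_mem_rootsZ A heven, ?_⟩
    ext k
    refine Fin.cases ?_ (fun k => ?_) k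
    · simp only [emb, toE, WithLp.equiv_symm_apply, Fin.cons_zero, Int.cast_ofNat]
      ring
    · rcases hs k with h | h <;> norm_num [emb, toE, A, h]

lemma exists_mem_rootsZ_of_mem_Phi {v : E6V} (hv : v ∈ Phi) :
    ∃ r ∈ rootsZ, v = emb r ∨ v = -emb r := by
  rcases hv with hv | hv
  · obtain ⟨r, hr, rfl⟩ := exists_mem_rootsZ_of_mem_PhiPlus hv
    exact ⟨r, hr, .inl rfl⟩
  · obtain ⟨r, hr, hvr⟩ := exists_mem_rootsZ_of_mem_PhiPlus (Set.mem_neg.1 hv)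
    exact ⟨r, hr, .inr (neg_eq_iff_eq_neg.1 hvr)⟩

def rootLattice : AddSubgroup E6V := AddSubgroup.closure (emb '' {r | r ∈ rootsZ})

lemma emb_mem_rootLattice {r : Fin 6 → ℤ} (hr : r ∈ rootsZ) : emb r ∈ rootLattice :=
  AddSubgroup.subset_closure ⟨r, hr, rfl⟩

lemma inner_self_emb_of_mem_rootsZ {r : Fin 6 → ℤ} (hr : r ∈ rootsZ) :
    ⟪emb r, emb r⟫_ℝ = 2 := by
  rw [inner_emb, zdot_self_of_mem_rootsZ r hr]
  norm_num

lemma exists_int_inner_of_mem_rootLattice {x y : E6V} (hx : x ∈ rootLattice)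
    (hy : y ∈ rootLattice) : ∃ n : ℤ, ⟪x, y⟫_ℝ = n := by
  refine exists_int_inner_of_mem_closure_of_mem_closure ?_ hx hy
  rintro _ ⟨r, hr, rfl⟩ _ ⟨r', hr', rfl⟩
  obtain ⟨n, hn⟩ := dvd_zdot_of_mem_rootsZ r hr r' hr'
  exact ⟨n, by rw [inner_emb, hn]; push_cast; ring⟩

lemma exists_inner_self_eq_two_mul_of_mem_rootLattice {x : E6V} (hx : x ∈ rootLattice) :
    ∃ m : ℤ, ⟪x, x⟫_ℝ = 2 * m := by
  refine exists_inner_self_eq_two_mul_of_mem_closure ?_ ?_ hx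
  · rintro _ ⟨r, hr, rfl⟩
    exact inner_self_emb_of_mem_rootsZ hr
  · rintro v hv w hw
    exact exists_int_inner_of_mem_rootLattice (AddSubgroup.subset_closure hv)
      (AddSubgroup.subset_closure hw)

lemma exists_int_inner_muE6_of_mem_rootLattice {x : E6V} (hx : x ∈ rootLattice) :
    ∃ n : ℤ, ⟪muE6, x⟫_ℝ = n := by
  refine exists_int_inner_of_mem_closure ?_ hx
  rintro _ ⟨r, hr, rfl⟩
  obtain ⟨n, hn⟩ := dvd_zdot_muE6_of_mem_rootsZ r hr
  exact ⟨n, by rw [muE6_eq_emb, inner_emb, hn]; push_cast; ring⟩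

lemma reflectIn_sub_muE6_mem_rootLattice {v x : E6V} (hv : v ∈ Phi)
    (hx : x - muE6 ∈ rootLattice) : reflectIn v x - muE6 ∈ rootLattice := by
  obtain ⟨r, hr, hvr⟩ := exists_mem_rootsZ_of_mem_Phi hv
  have hreflect : reflectIn v x = reflectIn (emb r) x := by
    rcases hvr with rfl | rfl
    exacts [rfl, reflectIn_neg _ _]
  have hmem := emb_mem_rootLattice hr
  obtain ⟨n, hn⟩ : ∃ n : ℤ, ⟪x, emb r⟫_ℝ = n := by
    obtain ⟨a, ha⟩ := exists_int_inner_muE6_of_mem_rootLattice hmem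
    obtain ⟨b, hb⟩ := exists_int_inner_of_mem_rootLattice hx hmem
    exact ⟨a + b, by rw [Int.cast_add, ← ha, ← hb, ← inner_add_left, add_sub_cancel]⟩
  rw [hreflect, reflectIn_of_inner_self_eq_two (inner_self_emb_of_mem_rootsZ hr), hn,
    Int.cast_smul_eq_zsmul, sub_right_comm]
  exact sub_mem hx (zsmul_mem hmem n)

lemma sub_muE6_mem_rootLattice_of_mem_SigmaE6 {x : E6V} (hx : x ∈ SigmaE6) :
    x - muE6 ∈ rootLattice := by
  have hμ : muE6 - muE6 ∈ rootLattice := by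
    rw [sub_self]
    exact zero_mem _
  rcases hx with (rfl | ⟨v, hv, rfl⟩) | ⟨v, hv, w, hw, rfl⟩
  · exact hμ
  · exact reflectIn_sub_muE6_mem_rootLattice hv hμ
  · exact reflectIn_sub_muE6_mem_rootLattice hv (reflectIn_sub_muE6_mem_rootLattice hw hμ)

lemma inner_self_of_mem_SigmaE6 {x : E6V} (hx : x ∈ SigmaE6) : ⟪x, x⟫_ℝ = 4 / 3 := by
  have hμ : ⟪muE6, muE6⟫_ℝ = 4 / 3 := by
    rw [muE6_eq_emb, inner_emb, show zdot ![4, 0, 0, 0, 0, 0] ![4, 0, 0, 0, 0, 0] = 48 by decide]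
    norm_num
  rcases hx with (rfl | ⟨v, hv, rfl⟩) | ⟨v, hv, w, hw, rfl⟩ <;>
    simp only [inner_reflectIn_self, hμ]

lemma inner_of_mem_SigmaE6 {x y : E6V} (hx : x ∈ SigmaE6) (hy : y ∈ SigmaE6) (hxy : x ≠ y) :
    ⟪x, y⟫_ℝ = 1 / 3 ∨ ⟪x, y⟫_ℝ = -2 / 3 := by
  have hsub : x - y ∈ rootLattice := by
    simpa using sub_mem (sub_muE6_mem_rootLattice_of_mem_SigmaE6 hx)
      (sub_muE6_mem_rootLattice_of_mem_SigmaE6 hy)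
  obtain ⟨m, hm⟩ := exists_inner_self_eq_two_mul_of_mem_rootLattice hsub
  exact inner_eq_of_inner_self_eq_four_thirds (inner_self_of_mem_SigmaE6 hx)
    (inner_self_of_mem_SigmaE6 hy) hxy hm

/-- Any subset of `Σ` with at least 4 elements spans a subspace of `ℝ⁶`
of dimension at least 3. -/
theorem e6_sigma_four_points_rank_three :
    ∀ s ⊆ SigmaE6, 4 ≤ s.ncard →
      3 ≤ Module.finrank ℝ (Submodule.span ℝ s) :=
  fun _ hs hcard => three_le_finrank_span_of_inner
    (fun _ hx => inner_self_of_mem_SigmaE6 (hs hx))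
    (fun _ hx _ hy => inner_of_mem_SigmaE6 (hs hx) (hs hy)) hcard

end
end

section
/- Let Λ be the additive subgroup of ℝ^6 generated by Σ (the weight lattice). Then the reduction map Σ → Λ/2Λ is injective; equivalently, for distinct λ₁, λ₂ ∈ Σ the difference λ₁ − λ₂ does not lie in 2Λ. -/
noncomputable section

/-!
Every root has norm `2` and lies in the even lattice `Q = ℤΦ`, which pairs integrally with `μ`.
So each reflection `σ_v x = x - ⟪x, v⟫ v` preserves both the coset `μ + Q` and the norm, whence
`Σ ⊆ μ + Q` and `⟪λ, λ⟫ = 4/3` on `Σ`, and `Λ ⊆ ℤμ + Q`. If `λ₁ - λ₂ = 2x` with `x = nμ + q ∈ Λ`,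
then `2nμ ∈ Q`; pairing with `μ` gives `8n/3 ∈ ℤ`, so `3 ∣ n` and `⟪x, x⟫` is an even integer.
But `4⟪x, x⟫ = ‖λ₁ - λ₂‖² ≤ 16/3`, so `x = 0`.
-/

open RealInnerProductSpace

theorem closure_le_zmultiples_sup {G : Type*} [AddCommGroup G] {Q : AddSubgroup G} {μ : G}
    {S : Set G} (hSQ : ∀ s ∈ S, s - μ ∈ Q) :
    AddSubgroup.closure S ≤ AddSubgroup.zmultiples μ ⊔ Q :=
  (AddSubgroup.closure_le _).2 fun s hs =>
    AddSubgroup.mem_sup.2 ⟨μ, AddSubgroup.mem_zmultiples μ, s - μ, hSQ s hs, add_sub_cancel μ s⟩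

section Lattice

variable {V : Type*} [NormedAddCommGroup V] [InnerProductSpace ℝ V] {Q : AddSubgroup V} {μ : V}

theorem three_dvd_of_zsmul_mem (hμQ : ∀ q ∈ Q, ∃ n : ℤ, ⟪μ, q⟫ = n) (hμ : ⟪μ, μ⟫ = 4 / 3)
    {k : ℤ} (hk : k • μ ∈ Q) : (3 : ℤ) ∣ k := by
  obtain ⟨n, hn⟩ := hμQ _ hk
  rw [← Int.cast_smul_eq_zsmul ℝ, real_inner_smul_right, hμ] at hn
  have : 4 * k = 3 * n := by exact_mod_cast (by linarith : (4 * k : ℝ) = 3 * n)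
  omega

theorem inner_self_even_of_add_self_mem (hQ : ∀ q ∈ Q, ∃ n : ℤ, ⟪q, q⟫ = 2 * n)
    (hμQ : ∀ q ∈ Q, ∃ n : ℤ, ⟪μ, q⟫ = n) (hμ : ⟪μ, μ⟫ = 4 / 3)
    {x : V} (hx : x ∈ AddSubgroup.zmultiples μ ⊔ Q) (h2x : x + x ∈ Q) :
    ∃ n : ℤ, ⟪x, x⟫ = 2 * n := by
  obtain ⟨_, ⟨k, rfl⟩, q, hq, rfl⟩ := AddSubgroup.mem_sup.1 hx
  have hkμ : (k + k) • μ ∈ Q := by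
    convert Q.sub_mem h2x (Q.add_mem hq hq) using 1
    simp only [add_smul]
    abel
  obtain ⟨j, rfl⟩ : (3 : ℤ) ∣ k := by
    have := three_dvd_of_zsmul_mem hμQ hμ hkμ
    omega
  obtain ⟨a, ha⟩ := hμQ q hq
  obtain ⟨b, hb⟩ := hQ q hq
  refine ⟨6 * j ^ 2 + 3 * j * a + b, ?_⟩
  simp only [← Int.cast_smul_eq_zsmul ℝ, inner_add_left, inner_add_right, real_inner_smul_left,
    real_inner_smul_right, real_inner_comm μ q, hμ, ha, hb]
  push_cast
  ring

theorem eq_of_sub_eq_add_self {S : Set V} (hQ : ∀ q ∈ Q, ∃ n : ℤ, ⟪q, q⟫ = 2 * n)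
    (hμQ : ∀ q ∈ Q, ∃ n : ℤ, ⟪μ, q⟫ = n) (hμ : ⟪μ, μ⟫ = 4 / 3)
    (hSQ : ∀ s ∈ S, s - μ ∈ Q) (hS : ∀ s ∈ S, ⟪s, s⟫ = 4 / 3)
    {s t x : V} (hs : s ∈ S) (ht : t ∈ S) (hx : x ∈ AddSubgroup.closure S)
    (h : s - t = x + x) : s = t := by
  have h2x : x + x ∈ Q := by
    rw [← h, show s - t = (s - μ) - (t - μ) by abel]
    exact Q.sub_mem (hSQ s hs) (hSQ t ht)
  obtain ⟨n, hn⟩ :=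
    inner_self_even_of_add_self_mem hQ hμQ hμ (closure_le_zmultiples_sup hSQ hx) h2x
  have hbound : 4 * ⟪x, x⟫ ≤ 16 / 3 := by
    have hpar : ⟪s - t, s - t⟫ + ⟪s + t, s + t⟫ = 2 * ⟪s, s⟫ + 2 * ⟪t, t⟫ := by
      simp only [inner_add_left, inner_add_right, inner_sub_left, inner_sub_right]
      ring
    have : ⟪s - t, s - t⟫ = 4 * ⟪x, x⟫ := by
      rw [h]
      simp only [inner_add_left, inner_add_right]
      ring
    linarith [hS s hs, hS t ht, real_inner_self_nonneg (x := s + t)]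
  have hn0 : n = 0 := by
    have h0 : (0 : ℝ) ≤ n := by linarith [real_inner_self_nonneg (x := x)]
    have h1 : (n : ℝ) < 1 := by linarith
    have : 0 ≤ n := by exact_mod_cast h0
    have : n < 1 := by exact_mod_cast h1
    omega
  rw [hn0, Int.cast_zero, mul_zero, inner_self_eq_zero] at hn
  rwa [hn, add_zero, sub_eq_zero] at h

end Lattice

theorem inner_toE_cons (a b : ℝ) (u w : Fin 5 → ℝ) :
    ⟪toE (Fin.cons a u), toE (Fin.cons b w)⟫ = a * b + ∑ k, u k * w k := by
  simp [toE, PiLp.inner_apply, Fin.sum_univ_succ, mul_comm]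

def rootLatticeHom : ℤ × (Fin 5 → ℤ) →+ E6V :=
  AddMonoidHom.mk' (fun p => toE (Fin.cons (p.1 * √3 / 2) fun k => p.2 k + p.1 / 2)) fun p q => by
    ext i
    cases i using Fin.cases <;> simp [toE] <;> ring

theorem inner_rootLatticeHom (p q : ℤ × (Fin 5 → ℤ)) :
    ⟪rootLatticeHom p, rootLatticeHom q⟫ =
      2 * p.1 * q.1 + ∑ k, p.2 k * q.2 k + (p.1 * ∑ k, q.2 k + q.1 * ∑ k, p.2 k) / 2 := by
  have h3 : √3 * √3 = 3 := Real.mul_self_sqrt (by norm_num)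
  rw [rootLatticeHom, AddMonoidHom.mk'_apply, inner_toE_cons]
  push_cast
  simp only [add_mul, mul_add, Finset.sum_add_distrib, ← Finset.sum_mul, ← Finset.mul_sum,
    Finset.sum_const, Finset.card_univ, Fintype.card_fin]
  linear_combination (p.1 * q.1 / 4 : ℝ) * h3

def evenSumPairs : AddSubgroup (ℤ × (Fin 5 → ℤ)) where
  carrier := {p | Even (∑ k, p.2 k)}
  add_mem' ha hb := by simpa [Finset.sum_add_distrib] using ha.add hb
  zero_mem' := by simp
  neg_mem' ha := by simpa using ha.neg

/-- The root lattice `ℤΦ`: in these coordinates it consists of the vectors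
`(a √3/2, z₁ + a/2, …, z₅ + a/2)` with `a, zₖ ∈ ℤ` and `∑ zₖ` even. -/
def rootLatticeE6 : AddSubgroup E6V := evenSumPairs.map rootLatticeHom

theorem inner_int_of_mem_rootLatticeE6 {x y : E6V} (hx : x ∈ rootLatticeE6)
    (hy : y ∈ rootLatticeE6) : ∃ n : ℤ, ⟪x, y⟫ = n := by
  obtain ⟨⟨a, z⟩, ⟨m, hm⟩, rfl⟩ := AddSubgroup.mem_map.1 hx
  obtain ⟨⟨b, w⟩, ⟨m', hm'⟩, rfl⟩ := AddSubgroup.mem_map.1 hy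
  refine ⟨2 * a * b + ∑ k, z k * w k + a * m' + b * m, ?_⟩
  rw [inner_rootLatticeHom]
  simp only at hm hm' ⊢
  rw [hm, hm']
  push_cast
  ring

theorem inner_self_even_of_mem_rootLatticeE6 {x : E6V} (hx : x ∈ rootLatticeE6) :
    ∃ n : ℤ, ⟪x, x⟫ = 2 * n := by
  obtain ⟨⟨a, z⟩, ⟨m, hm⟩, rfl⟩ := AddSubgroup.mem_map.1 hx
  obtain ⟨r, hr⟩ : Even (∑ k, z k * (z k - 1)) :=
    Finset.even_sum _ fun k _ => Int.even_mul_pred_self (z k)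
  have hsq : ∑ k, z k * z k = (r + r) + ∑ k, z k := by
    rw [← hr, ← Finset.sum_add_distrib]
    exact Finset.sum_congr rfl fun k _ => by ring
  refine ⟨a ^ 2 + r + m + a * m, ?_⟩
  rw [inner_rootLatticeHom]
  simp only at hm ⊢
  rw [hsq, hm]
  push_cast
  ring

theorem muE6_eq_toE_cons : muE6 = toE (Fin.cons (2 * √3 / 3) 0) := by
  ext i
  fin_cases i <;> rfl

theorem inner_muE6_self : ⟪muE6, muE6⟫ = 4 / 3 := by
  have h3 : √3 * √3 = 3 := Real.mul_self_sqrt (by norm_num)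
  rw [muE6_eq_toE_cons, inner_toE_cons]
  simp only [Pi.zero_apply, mul_zero, Finset.sum_const_zero, add_zero]
  linear_combination (4 / 9 : ℝ) * h3

theorem inner_muE6_int_of_mem_rootLatticeE6 {x : E6V} (hx : x ∈ rootLatticeE6) :
    ∃ n : ℤ, ⟪muE6, x⟫ = n := by
  obtain ⟨⟨a, z⟩, -, rfl⟩ := AddSubgroup.mem_map.1 hx
  have h3 : √3 * √3 = 3 := Real.mul_self_sqrt (by norm_num)
  refine ⟨a, ?_⟩
  rw [muE6_eq_toE_cons, rootLatticeHom, AddMonoidHom.mk'_apply, inner_toE_cons]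
  simp only [Pi.zero_apply, zero_mul, Finset.sum_const_zero, add_zero]
  linear_combination (a / 3 : ℝ) * h3

theorem stdE_succ_eq_rootLatticeHom (k : Fin 5) :
    stdE k.succ = rootLatticeHom (0, Pi.single k 1) := by
  ext i
  cases i using Fin.cases <;> simp [stdE, rootLatticeHom, toE, Pi.single_apply]

theorem stdE_add_or_sub_mem_rootLatticeE6 {i j : Fin 6} (hi : i ≠ 0) (hj : j ≠ 0) {v : E6V}
    (hv : v = stdE i + stdE j ∨ v = stdE i - stdE j) : v ∈ rootLatticeE6 := by
  obtain ⟨k, rfl⟩ := Fin.exists_succ_eq.2 hi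
  obtain ⟨l, rfl⟩ := Fin.exists_succ_eq.2 hj
  rw [stdE_succ_eq_rootLatticeHom, stdE_succ_eq_rootLatticeHom, ← map_add, ← map_sub,
    Prod.mk_add_mk, Prod.mk_sub_mk] at hv
  refine hv.elim (fun hv => ⟨_, ?_, hv.symm⟩) (fun hv => ⟨_, ?_, hv.symm⟩) <;>
    simp [evenSumPairs, Finset.sum_add_distrib, Finset.sum_sub_distrib]

theorem inner_self_stdE_add_or_sub {i j : Fin 6} (hij : i ≠ j) {v : E6V}
    (hv : v = stdE i + stdE j ∨ v = stdE i - stdE j) : ⟪v, v⟫ = 2 := by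
  rcases hv with rfl | rfl <;>
    simp only [stdE, inner_add_left, inner_add_right, inner_sub_left, inner_sub_right,
      EuclideanSpace.inner_single_left] <;> simp [hij, hij.symm] <;> norm_num

def spinorRoot (s : Fin 5 → ℝ) : E6V := toE (Fin.cons (√3 / 2) fun k => s k / 2)

theorem spinorRoot_eq_rootLatticeHom {s : Fin 5 → ℝ} (hs : ∀ k, s k = 1 ∨ s k = -1) :
    spinorRoot s = rootLatticeHom (1, fun k => if s k = -1 then -1 else 0) := by
  ext i
  cases i using Fin.cases with
  | zero => simp [spinorRoot, rootLatticeHom, toE]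
  | succ k => rcases hs k with h | h <;> simp [spinorRoot, rootLatticeHom, toE, h] <;> norm_num

theorem spinorRoot_mem_rootLatticeE6 {s : Fin 5 → ℝ} (hs : ∀ k, s k = 1 ∨ s k = -1)
    (he : Even (Finset.univ.filter fun k => s k = -1).card) : spinorRoot s ∈ rootLatticeE6 := by
  rw [spinorRoot_eq_rootLatticeHom hs]
  refine ⟨_, ?_, rfl⟩
  simpa [evenSumPairs, Finset.sum_ite] using he

theorem inner_self_spinorRoot {s : Fin 5 → ℝ} (hs : ∀ k, s k = 1 ∨ s k = -1) :
    ⟪spinorRoot s, spinorRoot s⟫ = 2 := by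
  have h3 : √3 * √3 = 3 := Real.mul_self_sqrt (by norm_num)
  have hs2 : ∀ k, s k / 2 * (s k / 2) = 1 / 4 := fun k => by
    rcases hs k with h | h <;> rw [h] <;> norm_num
  rw [spinorRoot, inner_toE_cons]
  simp only [hs2, Finset.sum_const, Finset.card_univ, Fintype.card_fin, nsmul_eq_mul]
  linear_combination (1 / 4 : ℝ) * h3

theorem mem_rootLatticeE6_and_inner_self_of_mem_phiPlus {v : E6V} (hv : v ∈ PhiPlus) :
    v ∈ rootLatticeE6 ∧ ⟪v, v⟫ = 2 := by
  rcases hv with ⟨i, j, hi, hij, hv⟩ | ⟨s, hs, he, rfl⟩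
  · have hi0 : i ≠ 0 := fun h => by simp [h] at hi
    exact ⟨stdE_add_or_sub_mem_rootLatticeE6 hi0 (Fin.ne_zero_of_lt hij) hv,
      inner_self_stdE_add_or_sub hij.ne hv⟩
  · exact ⟨spinorRoot_mem_rootLatticeE6 hs he, inner_self_spinorRoot hs⟩

theorem mem_rootLatticeE6_and_inner_self_of_mem_phi {v : E6V} (hv : v ∈ Phi) :
    v ∈ rootLatticeE6 ∧ ⟪v, v⟫ = 2 := by
  rcases hv with hv | hv
  · exact mem_rootLatticeE6_and_inner_self_of_mem_phiPlus hv
  · obtain ⟨hmem, hnorm⟩ := mem_rootLatticeE6_and_inner_self_of_mem_phiPlus (Set.mem_neg.1 hv)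
    exact ⟨neg_neg v ▸ rootLatticeE6.neg_mem hmem, by rwa [inner_neg_neg] at hnorm⟩

theorem reflectIn_eq_sub_inner_smul {v : E6V} (hv : ⟪v, v⟫ = 2) (x : E6V) :
    reflectIn v x = x - ⟪x, v⟫ • v := by
  rw [reflectIn, hv, mul_div_cancel_left₀ _ two_ne_zero]

theorem inner_self_reflectIn {v : E6V} (hv : ⟪v, v⟫ = 2) (x : E6V) :
    ⟪reflectIn v x, reflectIn v x⟫ = ⟪x, x⟫ := by
  simp only [reflectIn_eq_sub_inner_smul hv, inner_sub_left, inner_sub_right,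
    real_inner_smul_left, real_inner_smul_right, real_inner_comm x v, hv]
  ring

theorem reflectIn_sub_muE6_mem {v : E6V} (hv : v ∈ Phi) {x : E6V}
    (hx : x - muE6 ∈ rootLatticeE6) : reflectIn v x - muE6 ∈ rootLatticeE6 := by
  obtain ⟨hvQ, hvv⟩ := mem_rootLatticeE6_and_inner_self_of_mem_phi hv
  obtain ⟨a, ha⟩ := inner_int_of_mem_rootLatticeE6 hx hvQ
  obtain ⟨b, hb⟩ := inner_muE6_int_of_mem_rootLatticeE6 hvQ
  have hxv : ⟪x, v⟫ = ((a + b : ℤ) : ℝ) := by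
    rw [Int.cast_add, ← ha, ← hb, ← inner_add_left, sub_add_cancel]
  rw [reflectIn_eq_sub_inner_smul hvv, hxv, Int.cast_smul_eq_zsmul, sub_right_comm]
  exact rootLatticeE6.sub_mem hx (rootLatticeE6.zsmul_mem hvQ _)

theorem sub_muE6_mem_of_mem_sigmaE6 {x : E6V} (hx : x ∈ SigmaE6) :
    x - muE6 ∈ rootLatticeE6 := by
  have hμ : muE6 - muE6 ∈ rootLatticeE6 := by
    rw [sub_self]
    exact rootLatticeE6.zero_mem
  rcases hx with (rfl | ⟨v, hv, rfl⟩) | ⟨v, hv, w, hw, rfl⟩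
  · exact hμ
  · exact reflectIn_sub_muE6_mem hv hμ
  · exact reflectIn_sub_muE6_mem hv (reflectIn_sub_muE6_mem hw hμ)

theorem inner_self_of_mem_sigmaE6 {x : E6V} (hx : x ∈ SigmaE6) : ⟪x, x⟫ = 4 / 3 := by
  have hσ {v : E6V} (hv : v ∈ Phi) :=
    inner_self_reflectIn (mem_rootLatticeE6_and_inner_self_of_mem_phi hv).2
  rcases hx with (rfl | ⟨v, hv, rfl⟩) | ⟨v, hv, w, hw, rfl⟩
  · exact inner_muE6_self
  · rw [hσ hv, inner_muE6_self]
  · rw [hσ hv, hσ hw, inner_muE6_self]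

/-- Let `Λ` be the additive subgroup generated by `Σ` (the weight lattice).
Distinct elements of `Σ` remain distinct modulo `2Λ`: for distinct
`λ₁, λ₂ ∈ Σ`, the difference `λ₁ − λ₂` is not of the form `x + x` with `x ∈ Λ`. -/
theorem e6_sigma_injects_mod_two :
    ∀ l₁ ∈ SigmaE6, ∀ l₂ ∈ SigmaE6, l₁ ≠ l₂ →
      ¬ ∃ x ∈ AddSubgroup.closure SigmaE6, l₁ - l₂ = x + x := by
  rintro l₁ h₁ l₂ h₂ hne ⟨x, hx, h⟩
  exact hne <| eq_of_sub_eq_add_self (fun _ => inner_self_even_of_mem_rootLatticeE6)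
    (fun _ => inner_muE6_int_of_mem_rootLatticeE6) inner_muE6_self
    (fun _ => sub_muE6_mem_of_mem_sigmaE6) (fun _ => inner_self_of_mem_sigmaE6) h₁ h₂ hx h

end
end
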